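/- Let 0 < β < α < 1 with α² + β² = 1. The singlet-assemblage fraction of the initial assemblage Σ^(α) equals F_Φ(Σ^(α)) = (α + β)/√2 = √(1 − ½(α − β)²). -/

import Mathlib

open Matrix Finset
open scoped ComplexOrder

/-- Positive-semidefinite square root of a matrix (defined as `0` if the matrix
is not positive semidefinite). -/
noncomputable def matSqrt {d : ℕ} (A : Matrix (Fin d) (Fin d) ℂ) :
    Matrix (Fin d) (Fin d) ℂ :=
  open Classical in
  if h : A.PosSemidef then
    (h.1.eigenvectorUnitary : Matrix (Fin d) (Fin d) ℂ) *
      diagonal ((↑) ∘ (Real.sqrt ·) ∘ h.1.eigenvalues) *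
      (star h.1.eigenvectorUnitary : Matrix (Fin d) (Fin d) ℂ)
  else 0

/-- Fidelity between positive semidefinite matrices: `F(A,B) = Tr[√(√A · B · √A)]`. -/
noncomputable def mFid {d : ℕ} (A B : Matrix (Fin d) (Fin d) ℂ) : ℝ :=
  (matSqrt (matSqrt A * B * matSqrt A)).trace.re

/-- The standard basis vector `|0⟩` of `ℂ²`. -/
def e0 : Fin 2 → ℂ := ![1, 0]

/-- The standard basis vector `|1⟩` of `ℂ²`. -/
def e1 : Fin 2 → ℂ := ![0, 1]

/-- The projector `|0⟩⟨0|`. -/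
def P00 : Matrix (Fin 2) (Fin 2) ℂ := vecMulVec e0 (star e0)

/-- The projector `|1⟩⟨1|`. -/
def P11 : Matrix (Fin 2) (Fin 2) ℂ := vecMulVec e1 (star e1)

/-- The Kraus operator `K⁰ = (β/α)|0⟩⟨0| + |1⟩⟨1|` of the successful filter outcome. -/
noncomputable def K0 (α β : ℝ) : Matrix (Fin 2) (Fin 2) ℂ :=
  ((β / α : ℝ) : ℂ) • P00 + P11

/-- The Kraus operator `K¹ = (√(α²−β²)/α)|0⟩⟨0|` of the failed filter outcome. -/
noncomputable def K1 (α β : ℝ) : Matrix (Fin 2) (Fin 2) ℂ :=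
  ((Real.sqrt (α ^ 2 - β ^ 2) / α : ℝ) : ℂ) • P00

/-- Bob's reduced state `ρ_B = α²|0⟩⟨0| + β²|1⟩⟨1|` of the assemblage `Σ^(α)`. -/
noncomputable def ρB (α β : ℝ) : Matrix (Fin 2) (Fin 2) ℂ :=
  ((α ^ 2 : ℝ) : ℂ) • P00 + ((β ^ 2 : ℝ) : ℂ) • P11

/-- The vector `|α₊⟩ = α|0⟩ + β|1⟩`. -/
def ketαp (α β : ℝ) : Fin 2 → ℂ := ![(α : ℂ), (β : ℂ)]

/-- The vector `|α₋⟩ = α|0⟩ − β|1⟩`. -/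
def ketαm (α β : ℝ) : Fin 2 → ℂ := ![(α : ℂ), -(β : ℂ)]

/-- The vector `|+⟩ = (|0⟩+|1⟩)/√2`. -/
noncomputable def ketp : Fin 2 → ℂ :=
  ![(1 / Real.sqrt 2 : ℝ), (1 / Real.sqrt 2 : ℝ)]

/-- The vector `|−⟩ = (|0⟩−|1⟩)/√2`. -/
noncomputable def ketm : Fin 2 → ℂ :=
  ![(1 / Real.sqrt 2 : ℝ), (-(1 / Real.sqrt 2) : ℝ)]

/-- The assemblage `Σ^(α)` with components `σ^(α)_{a|x}` (first index `a`, second `x`):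
`σ^(α)_{0|0} = α²|0⟩⟨0|`, `σ^(α)_{1|0} = β²|1⟩⟨1|`,
`σ^(α)_{0|1} = ½|α₊⟩⟨α₊|`, `σ^(α)_{1|1} = ½|α₋⟩⟨α₋|`. -/
noncomputable def σα (α β : ℝ) (a x : Fin 2) : Matrix (Fin 2) (Fin 2) ℂ :=
  if x = 0 then
    if a = 0 then ((α ^ 2 : ℝ) : ℂ) • P00 else ((β ^ 2 : ℝ) : ℂ) • P11
  else
    if a = 0 then (1 / 2 : ℂ) • vecMulVec (ketαp α β) (star (ketαp α β))
    else (1 / 2 : ℂ) • vecMulVec (ketαm α β) (star (ketαm α β))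

/-- The singlet assemblage `Σ^{Φ⁺}` with components
`σ^{Φ⁺}_{0|0} = ½|0⟩⟨0|`, `σ^{Φ⁺}_{1|0} = ½|1⟩⟨1|`,
`σ^{Φ⁺}_{0|1} = ½|+⟩⟨+|`, `σ^{Φ⁺}_{1|1} = ½|−⟩⟨−|`. -/
noncomputable def σΦ (a x : Fin 2) : Matrix (Fin 2) (Fin 2) ℂ :=
  if x = 0 then
    if a = 0 then (1 / 2 : ℂ) • P00 else (1 / 2 : ℂ) • P11
  else
    if a = 0 then (1 / 2 : ℂ) • vecMulVec ketp (star ketp)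
    else (1 / 2 : ℂ) • vecMulVec ketm (star ketm)

/-!
Every component of both assemblages is a nonnegative multiple of a rank-one projector
`P = |v⟩⟨v|`. Since `P² = P`, the square root of `p P` is `√p P`, and `P |w⟩⟨w| P = |⟨v|w⟩|² P`,
so `F(p|v⟩⟨v|, q|w⟩⟨w|) = √(pq) |⟨v|w⟩|`. For `x = 0` this gives `α/√2 + β/√2`; for `x = 1`
the weights give `√(¼) = ½` and both overlaps `⟨α±|±⟩` equal `(α + β)/√2`, so both settings
give `(α + β)/√2`.
-/

open scoped MatrixOrder in
lemma matSqrt_eq_cfcSqrt {d : ℕ} {A : Matrix (Fin d) (Fin d) ℂ} (hA : A.PosSemidef) :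
    matSqrt A = CFC.sqrt A := by
  rw [matSqrt, dif_pos hA, CFC.sqrt_eq_cfc, cfc_nnreal_eq_real _ A, hA.1.cfc_eq]
  simp only [IsHermitian.cfc, Real.coe_sqrt, Real.coe_toNNReal', Unitary.conjStarAlgAut_apply]
  congr 3
  funext i
  simp [max_eq_left (hA.eigenvalues_nonneg i)]

open scoped MatrixOrder in
lemma matSqrt_eq_of_sq {d : ℕ} {A B : Matrix (Fin d) (Fin d) ℂ} (hB : B.PosSemidef)
    (h : B ^ 2 = A) : matSqrt A = B := by
  have hA : A.PosSemidef := h ▸ hB.pow 2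
  rw [matSqrt_eq_cfcSqrt hA, CFC.sqrt_eq_iff A B hA.nonneg hB.nonneg, ← sq, h]

lemma matSqrt_smul_of_idempotent {d : ℕ} {P : Matrix (Fin d) (Fin d) ℂ} (hP : P.PosSemidef)
    (hPP : P * P = P) {r : ℝ} (hr : 0 ≤ r) :
    matSqrt ((r : ℂ) • P) = (Real.sqrt r : ℂ) • P := by
  refine matSqrt_eq_of_sq (hP.smul (Complex.zero_le_real.mpr (Real.sqrt_nonneg r))) ?_
  rw [smul_pow, sq P, hPP, ← Complex.ofReal_pow, Real.sq_sqrt hr]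

section RankOne

variable {d : ℕ} {v w : Fin d → ℂ}

lemma vecMulVec_star_mul_self (hv : star v ⬝ᵥ v = 1) :
    vecMulVec v (star v) * vecMulVec v (star v) = vecMulVec v (star v) := by
  rw [vecMulVec_mul_vecMulVec, hv, one_smul]

lemma vecMulVec_star_sandwich (v w : Fin d → ℂ) :
    vecMulVec v (star v) * vecMulVec w (star w) * vecMulVec v (star v) =
      ((‖star v ⬝ᵥ w‖ ^ 2 : ℝ) : ℂ) • vecMulVec v (star v) := by
  have hwv : star w ⬝ᵥ v = star (star v ⬝ᵥ w) := by
    rw [star_dotProduct]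
  rw [vecMulVec_mul_vecMulVec, vecMulVec_mul_vecMulVec, smul_dotProduct, hwv,
    vecMulVec_smul, smul_eq_mul, Complex.star_def, Complex.mul_conj, Complex.normSq_eq_norm_sq]

lemma mFid_smul_vecMulVec (hv : star v ⬝ᵥ v = 1) {p q : ℝ} (hp : 0 ≤ p) (hq : 0 ≤ q) :
    mFid ((p : ℂ) • vecMulVec v (star v)) ((q : ℂ) • vecMulVec w (star w)) =
      Real.sqrt (p * q) * ‖star v ⬝ᵥ w‖ := by
  have hP := posSemidef_vecMulVec_self_star v
  have hPP := vecMulVec_star_mul_self hv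
  have hsandwich : ((Real.sqrt p : ℂ) • vecMulVec v (star v)) * ((q : ℂ) • vecMulVec w (star w)) *
      ((Real.sqrt p : ℂ) • vecMulVec v (star v)) =
      ((p * q * ‖star v ⬝ᵥ w‖ ^ 2 : ℝ) : ℂ) • vecMulVec v (star v) := by
    simp only [smul_mul_assoc, mul_smul_comm, vecMulVec_star_sandwich, smul_smul]
    congr 1
    have hp' : (Real.sqrt p : ℂ) * Real.sqrt p = p := by exact_mod_cast Real.mul_self_sqrt hp
    push_cast
    linear_combination (q * (‖star v ⬝ᵥ w‖ : ℂ) ^ 2) * hp'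
  rw [mFid, matSqrt_smul_of_idempotent hP hPP hp, hsandwich,
    matSqrt_smul_of_idempotent hP hPP (by positivity), trace_smul, trace_vecMulVec,
    dotProduct_comm v, hv, smul_eq_mul, mul_one, Complex.ofReal_re, Real.sqrt_mul (by positivity),
    Real.sqrt_sq (norm_nonneg _)]

end RankOne

lemma star_e0_dotProduct_e0 : star e0 ⬝ᵥ e0 = 1 := by
  simp [e0, dotProduct]

lemma star_e1_dotProduct_e1 : star e1 ⬝ᵥ e1 = 1 := by
  simp [e1, dotProduct]

section Overlaps

variable {α β : ℝ}

lemma star_ketαp_dotProduct_self (hnorm : α ^ 2 + β ^ 2 = 1) :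
    star (ketαp α β) ⬝ᵥ ketαp α β = 1 := by
  have h : (α : ℂ) ^ 2 + (β : ℂ) ^ 2 = 1 := by exact_mod_cast hnorm
  simp only [ketαp, dotProduct, Fin.sum_univ_two, Pi.star_apply, RCLike.star_def, cons_val_zero,
    cons_val_one, Complex.conj_ofReal]
  linear_combination h

lemma star_ketαm_dotProduct_self (hnorm : α ^ 2 + β ^ 2 = 1) :
    star (ketαm α β) ⬝ᵥ ketαm α β = 1 := by
  have h : (α : ℂ) ^ 2 + (β : ℂ) ^ 2 = 1 := by exact_mod_cast hnorm
  simp only [ketαm, dotProduct, Fin.sum_univ_two, Pi.star_apply, RCLike.star_def, cons_val_zero,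
    cons_val_one, Complex.conj_ofReal, map_neg]
  linear_combination h

lemma star_ketαp_dotProduct_ketp :
    star (ketαp α β) ⬝ᵥ ketp = (((α + β) / Real.sqrt 2 : ℝ) : ℂ) := by
  simp only [ketαp, ketp, dotProduct, Fin.sum_univ_two, Pi.star_apply, RCLike.star_def,
    cons_val_zero, cons_val_one, Complex.conj_ofReal]
  push_cast
  ring

lemma star_ketαm_dotProduct_ketm :
    star (ketαm α β) ⬝ᵥ ketm = (((α + β) / Real.sqrt 2 : ℝ) : ℂ) := by
  simp only [ketαm, ketm, dotProduct, Fin.sum_univ_two, Pi.star_apply, RCLike.star_def,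
    cons_val_zero, cons_val_one, Complex.conj_ofReal, map_neg]
  push_cast
  ring

end Overlaps

lemma sqrt_sq_mul_half {a : ℝ} (ha : 0 ≤ a) : Real.sqrt (a ^ 2 * (1 / 2)) = a / Real.sqrt 2 := by
  rw [Real.sqrt_mul (sq_nonneg a), Real.sqrt_sq ha, Real.sqrt_div' _ (by norm_num : (0:ℝ) ≤ 2),
    Real.sqrt_one, mul_one_div]

lemma sum_mFid_σα_σΦ_zero {α β : ℝ} (hα : 0 ≤ α) (hβ : 0 ≤ β) :
    ∑ a, mFid (σα α β a 0) (σΦ a 0) = (α + β) / Real.sqrt 2 := by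
  have half : (1 / 2 : ℂ) = ((1 / 2 : ℝ) : ℂ) := by norm_num
  simp only [Fin.sum_univ_two, σα, σΦ, P00, P11, if_true, one_ne_zero, if_false, half]
  rw [mFid_smul_vecMulVec star_e0_dotProduct_e0 (sq_nonneg α) (by norm_num),
    mFid_smul_vecMulVec star_e1_dotProduct_e1 (sq_nonneg β) (by norm_num),
    star_e0_dotProduct_e0, star_e1_dotProduct_e1, norm_one, mul_one, mul_one,
    sqrt_sq_mul_half hα, sqrt_sq_mul_half hβ, add_div]

lemma sum_mFid_σα_σΦ_one {α β : ℝ} (hnorm : α ^ 2 + β ^ 2 = 1) (hαβ : 0 ≤ α + β) :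
    ∑ a, mFid (σα α β a 1) (σΦ a 1) = (α + β) / Real.sqrt 2 := by
  have half : (1 / 2 : ℂ) = ((1 / 2 : ℝ) : ℂ) := by norm_num
  simp only [Fin.sum_univ_two, σα, σΦ, if_true, one_ne_zero, if_false, half]
  rw [mFid_smul_vecMulVec (star_ketαp_dotProduct_self hnorm) (by norm_num) (by norm_num),
    mFid_smul_vecMulVec (star_ketαm_dotProduct_self hnorm) (by norm_num) (by norm_num),
    star_ketαp_dotProduct_ketp, star_ketαm_dotProduct_ketm, Complex.norm_real, Real.norm_eq_abs,
    abs_of_nonneg (by positivity), show (1 / 2 * (1 / 2) : ℝ) = (1 / 2) ^ 2 by norm_num,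
    Real.sqrt_sq (by norm_num)]
  ring

theorem singlet_fraction_initial_general (α β : ℝ) (hβ : 0 < β) (hβα : β < α)
    (hnorm : α ^ 2 + β ^ 2 = 1) :
    min (∑ a, mFid (σα α β a 0) (σΦ a 0)) (∑ a, mFid (σα α β a 1) (σΦ a 1)) =
        (α + β) / Real.sqrt 2 ∧
      (α + β) / Real.sqrt 2 = Real.sqrt (1 - 1 / 2 * (α - β) ^ 2) := by
  have hαβ : 0 ≤ α + β := by linarith
  refine ⟨?_, ?_⟩
  · rw [sum_mFid_σα_σΦ_zero (by linarith) hβ.le, sum_mFid_σα_σΦ_one hnorm hαβ, min_self]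
  · rw [eq_comm, Real.sqrt_eq_iff_eq_sq _ (by positivity), div_pow,
      Real.sq_sqrt zero_le_two]
    · linear_combination -hnorm
    · nlinarith

/-- The singlet-assemblage fraction of the initial assemblage `Σ^(α)`,
`F_Φ(Σ^(α)) = min_{x∈{0,1}} Σ_a F(σ^(α)_{a|x}, σ^{Φ⁺}_{a|x})`, equals
`(α + β)/√2 = √(1 − ½(α − β)²)`. -/
theorem singlet_fraction_initial (α β : ℝ) (hβ : 0 < β) (hβα : β < α) (hα : α < 1)
    (hnorm : α ^ 2 + β ^ 2 = 1) :
    min (∑ a, mFid (σα α β a 0) (σΦ a 0)) (∑ a, mFid (σα α β a 1) (σΦ a 1)) =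
        (α + β) / Real.sqrt 2 ∧
      (α + β) / Real.sqrt 2 = Real.sqrt (1 - 1 / 2 * (α - β) ^ 2) :=
  singlet_fraction_initial_general α β hβ hβα hnorm
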